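/- arXiv:2309.13797 — 2 statements merged into one kernel-verified Lean document; each statement's English description precedes it below -/
import Mathlib

section
/- Fix k ≥ 3, q ∈ (0,1), r > 0, and define P_k(α,β,γ,δ) = α^(k-2)·k·(k-1)·(βγ + αδ/(k-1)) and g_r(α,β,γ,δ) = P_k(α,β,γ,δ)^r / (α^α β^β γ^γ δ^δ). For any α, δ ≥ 0 with α+δ = q and any β, γ > 0 with β+γ = 1-q, we have g_r(α, β, γ, δ) ≤ g_r(α, (1-q)/2, (1-q)/2, δ). -/
open Real

theorem g_le_symmetrized
    (k : ℕ) (hk : 3 ≤ k) (q : ℝ) (hq0 : 0 < q) (hq1 : q < 1) (r : ℝ) (hr : 0 < r)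
    (P : ℝ → ℝ → ℝ → ℝ → ℝ)
    (hP : P = fun α β γ δ => α ^ ((k : ℝ) - 2) * k * ((k : ℝ) - 1) * (β * γ + α * δ / ((k : ℝ) - 1)))
    (g : ℝ → ℝ → ℝ → ℝ → ℝ)
    (hg : g = fun α β γ δ => (P α β γ δ) ^ r / (α ^ α * β ^ β * γ ^ γ * δ ^ δ))
    (α δ : ℝ) (hα : 0 ≤ α) (hδ : 0 ≤ δ) (hαδ : α + δ = q)
    (β γ : ℝ) (hβ : 0 < β) (hγ : 0 < γ) (hβγ : β + γ = 1 - q) :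
    g α β γ δ ≤ g α ((1 - q) / 2) ((1 - q) / 2) δ := by
  subst hP hg
  set m : ℝ := (1 - q) / 2 with hm
  have hm0 : 0 < m := by have : 0 < 1 - q := by linarith
                         positivity
  have hk1 : (1 : ℝ) ≤ (k : ℝ) - 1 := by
    have : (3 : ℝ) ≤ (k : ℝ) := by exact_mod_cast hk
    linarith
  have hk0 : (0 : ℝ) < (k : ℝ) - 1 := by linarith
  have hkk : (0 : ℝ) ≤ (k : ℝ) := by positivity
  -- AM-GM for the product
  have hbg : β * γ ≤ m * m := by
    have : β + γ = 2 * m := by rw [hm]; linarith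
    nlinarith [sq_nonneg (β - γ)]
  -- P inequality
  have hPnn : 0 ≤ α ^ ((k : ℝ) - 2) * k * ((k : ℝ) - 1) * (β * γ + α * δ / ((k : ℝ) - 1)) := by
    have h1 : 0 ≤ α ^ ((k : ℝ) - 2) := rpow_nonneg hα _
    have h2 : 0 ≤ β * γ + α * δ / ((k : ℝ) - 1) := by positivity
    positivity
  have hPle : α ^ ((k : ℝ) - 2) * k * ((k : ℝ) - 1) * (β * γ + α * δ / ((k : ℝ) - 1))
      ≤ α ^ ((k : ℝ) - 2) * k * ((k : ℝ) - 1) * (m * m + α * δ / ((k : ℝ) - 1)) := by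
    have h1 : 0 ≤ α ^ ((k : ℝ) - 2) * k * ((k : ℝ) - 1) := by
      have := rpow_nonneg hα ((k : ℝ) - 2); positivity
    apply mul_le_mul_of_nonneg_left _ h1
    linarith
  -- numerator inequality
  have hnum : (α ^ ((k : ℝ) - 2) * k * ((k : ℝ) - 1) * (β * γ + α * δ / ((k : ℝ) - 1))) ^ r
      ≤ (α ^ ((k : ℝ) - 2) * k * ((k : ℝ) - 1) * (m * m + α * δ / ((k : ℝ) - 1))) ^ r :=
    rpow_le_rpow hPnn hPle hr.le
  -- denominator comparison: m^m * m^m ≤ β^β * γ^γ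
  have hconv : m * log m ≤ (β * log β + γ * log γ) / 2 := by
    have h := Real.convexOn_mul_log.2 (Set.mem_Ici.mpr hβ.le) (Set.mem_Ici.mpr hγ.le)
      (by norm_num : (0:ℝ) ≤ 1/2) (by norm_num : (0:ℝ) ≤ 1/2) (by norm_num)
    have hmid : (1/2 : ℝ) • β + (1/2 : ℝ) • γ = m := by
      simp [hm, smul_eq_mul]; linarith
    rw [hmid] at h
    simp only [smul_eq_mul] at h
    linarith
  have hden : m ^ m * m ^ m ≤ β ^ β * γ ^ γ := by
    rw [← exp_log (rpow_pos_of_pos hm0 m), ← exp_log (rpow_pos_of_pos hβ β),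
      ← exp_log (rpow_pos_of_pos hγ γ), log_rpow hm0, log_rpow hβ, log_rpow hγ,
      ← Real.exp_add, ← Real.exp_add]
    exact Real.exp_le_exp.mpr (by linarith)
  -- positivity of denominators
  have hαα : 0 < α ^ α := by
    rcases eq_or_lt_of_le hα with h | h
    · simp [← h, Real.rpow_zero]
    · exact rpow_pos_of_pos h α
  have hδδ : 0 < δ ^ δ := by
    rcases eq_or_lt_of_le hδ with h | h
    · simp [← h, Real.rpow_zero]
    · exact rpow_pos_of_pos h δ
  have hmm : 0 < m ^ m := rpow_pos_of_pos hm0 m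
  have hdenpos : 0 < α ^ α * m ^ m * m ^ m * δ ^ δ := by positivity
  have hdenle : α ^ α * m ^ m * m ^ m * δ ^ δ ≤ α ^ α * β ^ β * γ ^ γ * δ ^ δ := by
    have := mul_le_mul_of_nonneg_left hden hαα.le
    have := mul_le_mul_of_nonneg_right this hδδ.le
    nlinarith
  exact div_le_div₀ (rpow_nonneg (by
      have h1 : 0 ≤ α ^ ((k : ℝ) - 2) := rpow_nonneg hα _
      positivity) r) hnum hdenpos hdenle
end

section
/- Let r > 0 and define c₃(t) = (r + 1/6)(1−t)³ − (1−t)/6 and c₂(t) = (1−t)²/3 − (1−t)/3 + 2(r + 1/6)·t·(1−t)². Then (c₂, c₃) is the unique solution on [0, t₂) of the system c₃′(t) = −1/3 − 3c₃(t)/(1−t), c₂′(t) = −2c₂(t)/(1−t) + (2/3)·3c₃(t)/(1−t), with initial conditions c₂(0) = 0, c₃(0) = r, where t₂ = 1 − 1/√(6r+1). -/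
/-!
Both equations are linear of the form `y' = -k y / (1 - t) + h t`, so the difference `d` of two
solutions satisfies `d' = -k d / (1 - t)`; the integrating factor makes `d / (1 - t) ^ k`
constant, hence zero. The `c₃`-equation is decoupled, and once `g = c₃` the `c₂`-equation has the
same inhomogeneity for `f` and `c₂`.
-/

open Real Set

section IntegratingFactor

variable {k a b : ℝ} {d u v u' v' : ℝ → ℝ}

lemma hasDerivAt_div_one_sub_rpow_eq_zero {t : ℝ} (ht : t < 1)
    (hd : HasDerivAt d (-(k * d t) / (1 - t)) t) :
    HasDerivAt (fun x => d x / (1 - x) ^ k) 0 t := by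
  have hpos : 0 < 1 - t := sub_pos.2 ht
  have hpow : HasDerivAt (fun x => (1 - x) ^ k) (-1 * k * (1 - t) ^ (k - 1)) t :=
    ((hasDerivAt_id t).const_sub 1).rpow_const (Or.inl hpos.ne')
  refine (hd.div hpow (rpow_pos_of_pos hpos k).ne').congr_deriv ?_
  rw [rpow_sub_one hpos.ne']
  field_simp
  ring

lemma eqOn_zero_of_hasDerivAt_eq_neg_mul_div_one_sub (hb : b ≤ 1)
    (hd : ∀ t ∈ Ico a b, HasDerivAt d (-(k * d t) / (1 - t)) t) (ha : d a = 0) :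
    EqOn d 0 (Ico a b) := by
  intro t ht
  have hderiv : ∀ x ∈ Icc a t, HasDerivAt (fun x => d x / (1 - x) ^ k) 0 x := fun x hx =>
    have hx : x ∈ Ico a b := ⟨hx.1, hx.2.trans_lt ht.2⟩
    hasDerivAt_div_one_sub_rpow_eq_zero (hx.2.trans_le hb) (hd x hx)
  have hconst := constant_of_has_deriv_right_zero
    (fun x hx => (hderiv x hx).continuousAt.continuousWithinAt)
    (fun x hx => (hderiv x (Ico_subset_Icc_self hx)).hasDerivWithinAt) t (right_mem_Icc.2 ht.1)
  have hpos : 0 < (1 - t) ^ k := rpow_pos_of_pos (sub_pos.2 (ht.2.trans_le hb)) k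
  simpa [ha, hpos.ne'] using hconst

lemma eqOn_of_hasDerivAt_of_sub_eq_neg_mul_div_one_sub (hb : b ≤ 1)
    (hu : ∀ t ∈ Ico a b, HasDerivAt u (u' t) t) (hv : ∀ t ∈ Ico a b, HasDerivAt v (v' t) t)
    (hlin : ∀ t ∈ Ico a b, u' t - v' t = -(k * (u t - v t)) / (1 - t)) (ha : u a = v a) :
    EqOn u v (Ico a b) := fun _ ht =>
  sub_eq_zero.1 <| eqOn_zero_of_hasDerivAt_eq_neg_mul_div_one_sub (d := u - v) hb
    (fun x hx => hlin x hx ▸ (hu x hx).sub (hv x hx)) (sub_eq_zero.2 ha) ht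

end IntegratingFactor

namespace LazyLargestClause

noncomputable def c₃ (r t : ℝ) : ℝ := (r + 1 / 6) * (1 - t) ^ 3 - (1 - t) / 6

noncomputable def c₂ (r t : ℝ) : ℝ :=
  (1 - t) ^ 2 / 3 - (1 - t) / 3 + 2 * (r + 1 / 6) * t * (1 - t) ^ 2

lemma c₃_zero (r : ℝ) : c₃ r 0 = r := by norm_num [c₃]

lemma c₂_zero (r : ℝ) : c₂ r 0 = 0 := by norm_num [c₂]

lemma hasDerivAt_c₃ (r : ℝ) {t : ℝ} (ht : t ≠ 1) :
    HasDerivAt (c₃ r) (-(1 / 3) - 3 * c₃ r t / (1 - t)) t := by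
  have h := ((((hasDerivAt_id' t).const_sub 1).fun_pow 3).const_mul (r + 1 / 6)).sub
    (((hasDerivAt_id' t).const_sub 1).div_const 6)
  refine h.congr_deriv ?_
  have : 1 - t ≠ 0 := sub_ne_zero.2 (Ne.symm ht)
  unfold c₃
  field_simp
  ring

lemma hasDerivAt_c₂ (r : ℝ) {t : ℝ} (ht : t ≠ 1) :
    HasDerivAt (c₂ r) (-(2 * c₂ r t) / (1 - t) + (2 / 3) * (3 * c₃ r t / (1 - t))) t := by
  have hsq := ((hasDerivAt_id' t).const_sub 1).fun_pow 2
  have h := ((hsq.div_const 3).sub (((hasDerivAt_id' t).const_sub 1).div_const 3)).fun_add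
    (((hasDerivAt_id' t).const_mul (2 * (r + 1 / 6))).fun_mul hsq)
  refine h.congr_deriv ?_
  have : 1 - t ≠ 0 := sub_ne_zero.2 (Ne.symm ht)
  unfold c₂ c₃
  field_simp
  ring

end LazyLargestClause

open LazyLargestClause in
theorem ode_solution_unique_general (r : ℝ) :
    let t₂ : ℝ := 1 - 1 / Real.sqrt (6 * r + 1)
    let c₃ : ℝ → ℝ := fun t => (r + 1 / 6) * (1 - t) ^ 3 - (1 - t) / 6
    let c₂ : ℝ → ℝ := fun t =>
      (1 - t) ^ 2 / 3 - (1 - t) / 3 + 2 * (r + 1 / 6) * t * (1 - t) ^ 2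
    (c₂ 0 = 0 ∧ c₃ 0 = r ∧
      (∀ t ∈ Set.Ico (0 : ℝ) t₂,
        HasDerivAt c₃ (-(1 / 3) - 3 * c₃ t / (1 - t)) t ∧
        HasDerivAt c₂ (-(2 * c₂ t) / (1 - t) + (2 / 3) * (3 * c₃ t / (1 - t))) t)) ∧
    ∀ f g : ℝ → ℝ,
      f 0 = 0 → g 0 = r →
      (∀ t ∈ Set.Ico (0 : ℝ) t₂,
        HasDerivAt g (-(1 / 3) - 3 * g t / (1 - t)) t ∧
        HasDerivAt f (-(2 * f t) / (1 - t) + (2 / 3) * (3 * g t / (1 - t))) t) →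
      ∀ t ∈ Set.Ico (0 : ℝ) t₂, f t = c₂ t ∧ g t = c₃ t := by
  intro t₂ _ _
  have ht₂ : t₂ ≤ 1 := sub_le_self _ (by positivity)
  have hne : ∀ t ∈ Ico (0 : ℝ) t₂, t ≠ 1 := fun t ht => (ht.2.trans_le ht₂).ne
  refine ⟨⟨c₂_zero r, c₃_zero r, fun t ht =>
    ⟨hasDerivAt_c₃ r (hne t ht), hasDerivAt_c₂ r (hne t ht)⟩⟩, ?_⟩
  intro f g hf₀ hg₀ hfg
  have hg : EqOn g (c₃ r) (Ico 0 t₂) :=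
    eqOn_of_hasDerivAt_of_sub_eq_neg_mul_div_one_sub (k := 3) ht₂ (fun t ht => (hfg t ht).1)
      (fun t ht => hasDerivAt_c₃ r (hne t ht)) (fun t _ => by ring) (hg₀.trans (c₃_zero r).symm)
  have hf : EqOn f (c₂ r) (Ico 0 t₂) :=
    eqOn_of_hasDerivAt_of_sub_eq_neg_mul_div_one_sub (k := 2) ht₂ (fun t ht => (hfg t ht).2)
      (fun t ht => hasDerivAt_c₂ r (hne t ht)) (fun t ht => by rw [hg ht]; ring)
      (hf₀.trans (c₂_zero r).symm)
  exact fun t ht => ⟨hf ht, hg ht⟩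

theorem ode_solution_unique (r : ℝ) (hr : 0 < r) :
    let t₂ : ℝ := 1 - 1 / Real.sqrt (6 * r + 1)
    let c₃ : ℝ → ℝ := fun t => (r + 1 / 6) * (1 - t) ^ 3 - (1 - t) / 6
    let c₂ : ℝ → ℝ := fun t =>
      (1 - t) ^ 2 / 3 - (1 - t) / 3 + 2 * (r + 1 / 6) * t * (1 - t) ^ 2
    (c₂ 0 = 0 ∧ c₃ 0 = r ∧
      (∀ t ∈ Set.Ico (0 : ℝ) t₂,
        HasDerivAt c₃ (-(1 / 3) - 3 * c₃ t / (1 - t)) t ∧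
        HasDerivAt c₂ (-(2 * c₂ t) / (1 - t) + (2 / 3) * (3 * c₃ t / (1 - t))) t)) ∧
    ∀ f g : ℝ → ℝ,
      f 0 = 0 → g 0 = r →
      (∀ t ∈ Set.Ico (0 : ℝ) t₂,
        HasDerivAt g (-(1 / 3) - 3 * g t / (1 - t)) t ∧
        HasDerivAt f (-(2 * f t) / (1 - t) + (2 / 3) * (3 * g t / (1 - t))) t) →
      ∀ t ∈ Set.Ico (0 : ℝ) t₂, f t = c₂ t ∧ g t = c₃ t :=
  ode_solution_unique_general r
end
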